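/- arXiv:1805.11505 — 7 statements merged into one kernel-verified Lean document; each statement's English description precedes it below -/
import Mathlib

section
/- Suppose η̃(x) = η(x){1−ρ₁(x)} + {1−η(x)}ρ₀(x), and that there exist ρ* < 1/2 and a* < 1 with ρ₀(x) + ρ₁(x) ≤ 2ρ* and, when η(x) ≠ 1/2, [ρ₁(x) − ρ₀(x)]/[{2η(x)−1}{1 − ρ₀(x) − ρ₁(x)}] ≤ a*. Then |2η̃(x) − 1| ≥ |2η(x) − 1|(1 − 2ρ*)(1 − a*). -/
/-- If `η̃ = η(1−ρ₁) + (1−η)ρ₀`, `ρ₀ + ρ₁ ≤ 2ρ*` with `ρ* < 1/2`, and (when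
`η ≠ 1/2`) `(ρ₁ − ρ₀)/((2η−1)(1−ρ₀−ρ₁)) ≤ a*` with `a* < 1`, then
`|2η̃ − 1| ≥ |2η − 1| (1 − 2ρ*)(1 − a*)`. -/
theorem stmt4 (η ηt ρ0 ρ1 ρs as : ℝ)
    (hηb : η ∈ Set.Icc (0:ℝ) 1) (hρ0b : ρ0 ∈ Set.Icc (0:ℝ) 1) (hρ1b : ρ1 ∈ Set.Icc (0:ℝ) 1)
    (hρs0 : 0 ≤ ρs) (hρs : ρs < 1/2) (has : as < 1)
    (h : ηt = η * (1 - ρ1) + (1 - η) * ρ0)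
    (hsum : ρ0 + ρ1 ≤ 2 * ρs)
    (hratio : η ≠ 1/2 → (ρ1 - ρ0) / ((2 * η - 1) * (1 - ρ0 - ρ1)) ≤ as) :
    |2 * ηt - 1| ≥ |2 * η - 1| * (1 - 2 * ρs) * (1 - as) := by
  have hs : 0 < 1 - ρ0 - ρ1 := by linarith
  by_cases hη : η = 1/2
  · have : |2 * η - 1| = 0 := by rw [hη]; norm_num
    rw [this]
    simpa using abs_nonneg (2 * ηt - 1)
  · have ht : 2 * η - 1 ≠ 0 := by
      intro hc; apply hη; linarith
    have hr := hratio hη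
    set r := (ρ1 - ρ0) / ((2 * η - 1) * (1 - ρ0 - ρ1)) with hrdef
    have key : 2 * ηt - 1 = (2 * η - 1) * (1 - ρ0 - ρ1) * (1 - r) := by
      rw [hrdef, h]
      field_simp
      ring
    have hr1 : 0 < 1 - r := by linarith
    rw [key, abs_mul, abs_mul, abs_of_pos hs, abs_of_pos hr1]
    have h0 : 0 ≤ |2 * η - 1| := abs_nonneg _
    nlinarith [mul_le_mul_of_nonneg_left (sub_le_sub_left hr 1) h0,
      mul_nonneg h0 (le_of_lt hr1)]
end

section
/- Assume P_X({x : η(x) ≠ 1/2 and C̃^Bayes(x) ≠ C^Bayes(x)}) = 0. Then for every κ > 0 and any classifier C, R(C) − R(C^Bayes) ≤ κ{R̃(C) − R̃(C̃^Bayes)} + P_X(A_κ^c), where A_κ = {x : |2η(x) − 1| ≤ κ|2η̃(x) − 1|}. -/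
/-!
If `C^Bayes` is the Bayes classifier of `η`, the excess risk of `C` is the integral of
`|2η − 1|` over `{C ≠ C^Bayes}`. Outside the `P_X`-null set where `η ≠ 1/2` and the two Bayes
classifiers differ, a point of `{C ≠ C^Bayes}` either has `η = 1/2`, so contributes nothing, or
lies in `{C ≠ C̃^Bayes}`; there the integrand is at most `κ |2η̃ − 1|` on `A_κ`, and at most `1`
on `A_κᶜ`. Integrating this pointwise bound gives the inequality.
-/

open MeasureTheory

section Pointwise

variable {𝒳 : Type*} {η : 𝒳 → ℝ}

noncomputable def pointwiseExcessRisk (η : 𝒳 → ℝ) (C C' : 𝒳 → Bool) : 𝒳 → ℝ :=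
  {x | C x ≠ C' x}.indicator fun x => |2 * η x - 1|

lemma pointwiseExcessRisk_le {ηt : 𝒳 → ℝ} {C CB CtB : 𝒳 → Bool} {κ : ℝ} (hκ : 0 ≤ κ) {x : 𝒳}
    (hηx : η x ∈ Set.Icc (0 : ℝ) 1) (hx : η x = 1/2 ∨ CtB x = CB x) :
    pointwiseExcessRisk η C CB x ≤ κ * pointwiseExcessRisk ηt C CtB x
      + {x | |2 * η x - 1| ≤ κ * |2 * ηt x - 1|}ᶜ.indicator 1 x := by
  have hη_le : |2 * η x - 1| ≤ 1 := abs_le.2 ⟨by linarith [hηx.1], by linarith [hηx.2]⟩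
  have hηt_nonneg : 0 ≤ κ * |2 * ηt x - 1| := mul_nonneg hκ (abs_nonneg _)
  simp only [pointwiseExcessRisk, Set.indicator_apply, Set.mem_compl_iff, Set.mem_ofPred_eq,
    Pi.one_apply]
  rcases hx with h | h <;> split_ifs <;> grind

end Pointwise

section Risk

variable {Ω 𝒳 : Type*} [MeasurableSpace Ω] [MeasurableSpace 𝒳] {μ : Measure Ω} {X : Ω → 𝒳}
  {Y : Ω → Bool} {η : 𝒳 → ℝ}

def IsRegressionFunction (μ : Measure Ω) (X : Ω → 𝒳) (Y : Ω → Bool) (η : 𝒳 → ℝ) : Prop :=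
  ∀ A : Set 𝒳, MeasurableSet A →
    ∫ x in A, η x ∂(μ.map X) = μ.real (X ⁻¹' A ∩ {ω | Y ω = true})

lemma integrable_of_forall_mem_Icc {P : Measure 𝒳} [IsFiniteMeasure P] (hηm : Measurable η)
    (hηb : ∀ x, η x ∈ Set.Icc (0 : ℝ) 1) : Integrable η P :=
  .of_bound hηm.aestronglyMeasurable 1 <| ae_of_all _ fun x =>
    abs_le.2 ⟨by linarith [(hηb x).1], (hηb x).2⟩

lemma measurable_bayesClassifier (hηm : Measurable η) {C : 𝒳 → Bool}
    (hC : ∀ x, C x = if (1/2 : ℝ) ≤ η x then true else false) : Measurable C := by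
  rw [funext hC]
  exact .ite (measurableSet_le measurable_const hηm) measurable_const measurable_const

lemma integrable_ite_one_sub {P : Measure 𝒳} [IsFiniteMeasure P] (hηi : Integrable η P)
    {C : 𝒳 → Bool} (hC : Measurable C) :
    Integrable (fun x => if C x then 1 - η x else η x) P :=
  Integrable.piecewise (s := {x | C x = true}) (hC (measurableSet_singleton true))
    ((integrable_const 1).sub hηi).integrableOn hηi.integrableOn

lemma integrable_pointwiseExcessRisk {P : Measure 𝒳} [IsFiniteMeasure P] (hηi : Integrable η P)
    {C C' : 𝒳 → Bool} (hC : Measurable C) (hC' : Measurable C') :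
    Integrable (pointwiseExcessRisk η C C') P :=
  ((hηi.const_mul 2).sub (integrable_const 1)).abs.indicator (measurableSet_eq_fun hC hC').compl

variable [IsFiniteMeasure μ]

lemma setIntegral_one_sub_eq_measureReal (hX : Measurable X) (hY : Measurable Y)
    (hη : IsRegressionFunction μ X Y η) (hηi : Integrable η (μ.map X))
    {S : Set 𝒳} (hS : MeasurableSet S) :
    ∫ x in S, (1 - η x) ∂(μ.map X) = μ.real (X ⁻¹' S ∩ {ω | Y ω = false}) := by
  have hXS := measureReal_inter_add_sdiff (μ := μ) (s := X ⁻¹' S) (t := {ω | Y ω = true})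
    (hY (measurableSet_singleton true))
  rw [integral_sub (integrable_const 1).integrableOn hηi.integrableOn, setIntegral_const,
    hη S hS, map_measureReal_apply hX hS, smul_eq_mul, mul_one, ← hXS, add_sub_cancel_left]
  congr 1
  ext ω
  simp

theorem measureReal_ne_eq_integral (hX : Measurable X) (hY : Measurable Y)
    (hη : IsRegressionFunction μ X Y η) (hηi : Integrable η (μ.map X))
    {C : 𝒳 → Bool} (hC : Measurable C) :
    μ.real {ω | C (X ω) ≠ Y ω} = ∫ x, (if C x then 1 - η x else η x) ∂(μ.map X) := by
  set S := {x | C x = true}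
  have hS : MeasurableSet S := hC (measurableSet_singleton true)
  have hsplit : {ω | C (X ω) ≠ Y ω}
      = (X ⁻¹' S ∩ {ω | Y ω = false}) ∪ (X ⁻¹' Sᶜ ∩ {ω | Y ω = true}) := by
    ext ω
    cases hc : C (X ω) <;> cases hy : Y ω <;> simp [S, hc, hy]
  have hdisj : Disjoint (X ⁻¹' S ∩ {ω | Y ω = false}) (X ⁻¹' Sᶜ ∩ {ω | Y ω = true}) :=
    Set.disjoint_left.2 fun ω h h' => h'.1 h.1
  rw [hsplit, measureReal_union hdisj ((hX hS.compl).inter (hY (measurableSet_singleton true))),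
    ← integral_add_compl hS (integrable_ite_one_sub hηi hC),
    ← setIntegral_one_sub_eq_measureReal hX hY hη hηi hS, ← hη Sᶜ hS.compl]
  congr 1
  · exact setIntegral_congr_fun hS fun x hx => by simp_all [S]
  · exact setIntegral_congr_fun hS.compl fun x hx => by simp_all [S]

theorem excessRisk_eq_integral (hX : Measurable X) (hY : Measurable Y)
    (hη : IsRegressionFunction μ X Y η) (hηm : Measurable η) (hηi : Integrable η (μ.map X))
    {CB : 𝒳 → Bool} (hCB : ∀ x, CB x = if (1/2 : ℝ) ≤ η x then true else false)
    {C : 𝒳 → Bool} (hC : Measurable C) :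
    μ.real {ω | C (X ω) ≠ Y ω} - μ.real {ω | CB (X ω) ≠ Y ω}
      = ∫ x, pointwiseExcessRisk η C CB x ∂(μ.map X) := by
  have hCB' := measurable_bayesClassifier hηm hCB
  rw [measureReal_ne_eq_integral hX hY hη hηi hC, measureReal_ne_eq_integral hX hY hη hηi hCB',
    ← integral_sub (integrable_ite_one_sub hηi hC) (integrable_ite_one_sub hηi hCB')]
  congr 1 with x
  simp only [pointwiseExcessRisk, Set.indicator_apply, Set.mem_ofPred_eq, hCB x]
  split_ifs <;> cases C x <;> grind

end Risk

/-- If `P_X({x : η(x) ≠ 1/2 and C̃^Bayes(x) ≠ C^Bayes(x)}) = 0`, then for every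
`κ > 0` and any classifier `C`,
`R(C) − R(C^Bayes) ≤ κ (R̃(C) − R̃(C̃^Bayes)) + P_X(A_κᶜ)`,
where `A_κ = {x : |2η(x) − 1| ≤ κ |2η̃(x) − 1|}`. -/
theorem stmt7 {Ω 𝒳 : Type*} [MeasurableSpace Ω] [MeasurableSpace 𝒳]
    (μ : Measure Ω) [IsProbabilityMeasure μ]
    (X : Ω → 𝒳) (Y Yt : Ω → Bool)
    (hX : Measurable X) (hY : Measurable Y) (hYt : Measurable Yt)
    (η ηt : 𝒳 → ℝ) (hηm : Measurable η) (hηtm : Measurable ηt)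
    (hηb : ∀ x, η x ∈ Set.Icc (0:ℝ) 1) (hηtb : ∀ x, ηt x ∈ Set.Icc (0:ℝ) 1)
    (hη : ∀ A : Set 𝒳, MeasurableSet A →
      ∫ x in A, η x ∂(Measure.map X μ) = (μ (X ⁻¹' A ∩ {ω | Y ω = true})).toReal)
    (hηt : ∀ A : Set 𝒳, MeasurableSet A →
      ∫ x in A, ηt x ∂(Measure.map X μ) = (μ (X ⁻¹' A ∩ {ω | Yt ω = true})).toReal)
    (CBayes CtBayes : 𝒳 → Bool)
    (hCBayes : ∀ x, CBayes x = if (1/2 : ℝ) ≤ η x then true else false)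
    (hCtBayes : ∀ x, CtBayes x = if (1/2 : ℝ) ≤ ηt x then true else false)
    -- the Bayes classifiers agree off the set {η = 1/2}, P_X-a.e.
    (hagree : Measure.map X μ {x | η x ≠ 1/2 ∧ CtBayes x ≠ CBayes x} = 0) :
    ∀ κ : ℝ, 0 < κ → ∀ C : 𝒳 → Bool, Measurable C →
      (μ {ω | C (X ω) ≠ Y ω}).toReal - (μ {ω | CBayes (X ω) ≠ Y ω}).toReal
        ≤ κ * ((μ {ω | C (X ω) ≠ Yt ω}).toReal - (μ {ω | CtBayes (X ω) ≠ Yt ω}).toReal)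
          + (Measure.map X μ {x | |2 * η x - 1| ≤ κ * |2 * ηt x - 1|}ᶜ).toReal := by
  intro κ hκ C hC
  have hηi : Integrable η (μ.map X) := integrable_of_forall_mem_Icc hηm hηb
  have hηti : Integrable ηt (μ.map X) := integrable_of_forall_mem_Icc hηtm hηtb
  set A := {x | |2 * η x - 1| ≤ κ * |2 * ηt x - 1|}
  have hA : MeasurableSet A := measurableSet_le (by fun_prop) (by fun_prop)
  have hCB := integrable_pointwiseExcessRisk hηi hC (measurable_bayesClassifier hηm hCBayes)
  have hCtB := integrable_pointwiseExcessRisk hηti hC (measurable_bayesClassifier hηtm hCtBayes)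
  have hAc : Integrable (Aᶜ.indicator (1 : 𝒳 → ℝ)) (μ.map X) :=
    (integrable_const 1).indicator hA.compl
  have hagree_ae : ∀ᵐ x ∂μ.map X, η x = 1/2 ∨ CtBayes x = CBayes x := by
    filter_upwards [measure_eq_zero_iff_ae_notMem.1 hagree] with x hx
    tauto
  simp only [← measureReal_def]
  rw [excessRisk_eq_integral hX hY hη hηm hηi hCBayes hC,
    excessRisk_eq_integral hX hYt hηt hηtm hηti hCtBayes hC, ← integral_const_mul,
    ← integral_indicator_one hA.compl, ← integral_add (hCtB.const_mul κ) hAc]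
  refine integral_mono_ae hCB ((hCtB.const_mul κ).add hAc) ?_
  filter_upwards [hagree_ae] with x hx
  exact pointwiseExcessRisk_le hκ.le (hηb x) hx
end

section
/- Suppose there exist ρ* < 1/2 and a* < 1 such that P_X-almost everywhere on {η ≠ 1/2} one has ρ₀(x) + ρ₁(x) ≤ 2ρ* and [ρ₁(x) − ρ₀(x)]/[{2η(x)−1}{1 − ρ₀(x) − ρ₁(x)}] ≤ a*. Then for any classifier C, R(C) − R(C^Bayes) ≤ {R̃(C) − R̃(C̃^Bayes)}/{(1−2ρ*)(1−a*)}. -/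
/-!
Both excess risks are `P_X`-integrals of pointwise excess conditional risks. Since
`2η̃ - 1 = (2η - 1)(1 - ρ₀ - ρ₁) - (ρ₁ - ρ₀)`, the two noise conditions give
`(2η - 1)(2η̃ - 1) ≥ (1 - 2ρ*)(1 - a*)(2η - 1)²`: off `{η = 1/2}` the clean and noisy Bayes
classifiers agree and `|2η̃ - 1| ≥ (1 - 2ρ*)(1 - a*) |2η - 1|`, which compares the pointwise
excess risks; integrating gives the theorem.
-/

open MeasureTheory

def condErr (p : ℝ) (b : Bool) : ℝ := if b then 1 - p else p

noncomputable def bayesLabel (p : ℝ) : Bool := if (1/2 : ℝ) ≤ p then true else false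

lemma bayesLabel_of_le {p : ℝ} (h : 1/2 ≤ p) : bayesLabel p = true := if_pos h

lemma bayesLabel_of_lt {p : ℝ} (h : p < 1/2) : bayesLabel p = false := if_neg h.not_ge

lemma condErr_sub_condErr_bayesLabel_le_div {p q κ : ℝ} (hκ : 0 < κ)
    (h : κ * (2 * p - 1) ^ 2 ≤ (2 * p - 1) * (2 * q - 1)) (b : Bool) :
    condErr p b - condErr p (bayesLabel p)
      ≤ (condErr q b - condErr q (bayesLabel q)) / κ := by
  rw [le_div_iff₀ hκ]
  rcases le_or_gt (1/2) p with hp | hp <;> rcases le_or_gt (1/2) q with hq | hq <;>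
    cases b <;>
    simp only [bayesLabel_of_le, bayesLabel_of_lt, hp, hq, condErr, if_true, if_false,
      Bool.false_eq_true] <;>
    nlinarith

lemma noise_margin {e et r0 r1 ρs as : ℝ} (hρs : ρs < 1/2) (has : as < 1)
    (het : et = e * (1 - r1) + (1 - e) * r0)
    (hnoise : e ≠ 1/2 →
      r0 + r1 ≤ 2 * ρs ∧ (r1 - r0) / ((2 * e - 1) * (1 - r0 - r1)) ≤ as) :
    (1 - 2 * ρs) * (1 - as) * (2 * e - 1) ^ 2 ≤ (2 * e - 1) * (2 * et - 1) := by
  rcases eq_or_ne e (1/2) with rfl | hne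
  · norm_num
  obtain ⟨hsum, hratio⟩ := hnoise hne
  have hm : 2 * e - 1 ≠ 0 := fun h => hne (by linarith)
  have hs : 0 < 1 - r0 - r1 := by linarith
  have hratio' : (2 * e - 1) * (r1 - r0) ≤ as * (2 * e - 1) ^ 2 * (1 - r0 - r1) := by
    set d := (2 * e - 1) * (1 - r0 - r1)
    have hd : (r1 - r0) * d = (r1 - r0) / d * d ^ 2 := by field_simp
    refine le_of_mul_le_mul_left ?_ hs
    calc (1 - r0 - r1) * ((2 * e - 1) * (r1 - r0)) = (r1 - r0) / d * d ^ 2 := by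
          rw [← hd]; ring
      _ ≤ as * d ^ 2 := mul_le_mul_of_nonneg_right hratio (sq_nonneg d)
      _ = (1 - r0 - r1) * (as * (2 * e - 1) ^ 2 * (1 - r0 - r1)) := by ring
  have hsplit : 2 * et - 1 = (2 * e - 1) * (1 - r0 - r1) - (r1 - r0) := by rw [het]; ring
  rw [hsplit]
  nlinarith [mul_le_mul_of_nonneg_left (by linarith : 1 - 2 * ρs ≤ 1 - r0 - r1)
    (sq_nonneg (2 * e - 1))]

section Risk

variable {Ω 𝒳 : Type*} [MeasurableSpace Ω] [MeasurableSpace 𝒳] {μ : Measure Ω}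
  {X : Ω → 𝒳} {Y : Ω → Bool} {η : 𝒳 → ℝ} {D : 𝒳 → Bool}

lemma measurable_bayesLabel (hη : Measurable η) : Measurable fun x => bayesLabel (η x) :=
  Measurable.ite (measurableSet_le measurable_const hη) measurable_const measurable_const

lemma measurable_condErr (hη : Measurable η) (hD : Measurable D) :
    Measurable fun x => condErr (η x) (D x) :=
  Measurable.ite (hD (measurableSet_singleton true)) (measurable_const.sub hη) hη

lemma integrable_condErr {ν : Measure 𝒳} [IsFiniteMeasure ν] (hηm : Measurable η)
    (hηb : ∀ x, η x ∈ Set.Icc (0:ℝ) 1) (hD : Measurable D) :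
    Integrable (fun x => condErr (η x) (D x)) ν := by
  refine .of_bound (measurable_condErr hηm hD).aestronglyMeasurable 1 (ae_of_all _ fun x => ?_)
  obtain ⟨h0, h1⟩ := hηb x
  rw [Real.norm_eq_abs, abs_le]
  cases D x <;> simp only [condErr, Bool.false_eq_true, if_true, if_false] <;>
    constructor <;> linarith

lemma measureReal_ne_eq_integral_condErr [IsFiniteMeasure μ] (hX : Measurable X)
    (hY : Measurable Y) (hηm : Measurable η) (hηb : ∀ x, η x ∈ Set.Icc (0:ℝ) 1)
    (hη : ∀ A : Set 𝒳, MeasurableSet A →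
      ∫ x in A, η x ∂(Measure.map X μ) = (μ (X ⁻¹' A ∩ {ω | Y ω = true})).toReal)
    (hD : Measurable D) :
    (μ {ω | D (X ω) ≠ Y ω}).toReal = ∫ x, condErr (η x) (D x) ∂μ.map X := by
  set A := {x | D x}
  set T := {ω | Y ω = true}
  have hA : MeasurableSet A := hD (measurableSet_singleton true)
  have hT : MeasurableSet T := hY (measurableSet_singleton true)
  have hsplit : {ω | D (X ω) ≠ Y ω} = (X ⁻¹' A \ T) ∪ (X ⁻¹' Aᶜ ∩ T) := by
    ext ω
    simp only [A, T, Set.mem_ofPred_eq, Set.mem_union, Set.mem_sdiff, Set.mem_inter_iff,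
      Set.mem_preimage, Set.mem_compl_iff]
    cases D (X ω) <;> cases Y ω <;> simp
  have hdisj : Disjoint (X ⁻¹' A \ T) (X ⁻¹' Aᶜ ∩ T) :=
    Set.disjoint_left.2 fun ω h1 h2 => h1.2 h2.2
  have hon : μ.real (X ⁻¹' A \ T) = ∫ x in A, condErr (η x) (D x) ∂μ.map X := by
    have hint : Integrable η (μ.map X) := .of_bound hηm.aestronglyMeasurable 1 <|
      ae_of_all _ fun x => abs_le.2 ⟨by linarith [(hηb x).1], (hηb x).2⟩
    rw [setIntegral_congr_fun hA (f := fun x => condErr (η x) (D x)) (g := fun x => 1 - η x)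
        fun x hx => if_pos hx,
      integral_sub (integrable_const 1) hint.restrict, setIntegral_const, smul_eq_mul, mul_one,
      hη A hA, ← measureReal_def, map_measureReal_apply hX hA,
      ← measureReal_sdiff_add_inter hT (s := X ⁻¹' A), add_sub_cancel_right]
  have hoff : μ.real (X ⁻¹' Aᶜ ∩ T) = ∫ x in Aᶜ, condErr (η x) (D x) ∂μ.map X := by
    rw [setIntegral_congr_fun hA.compl (f := fun x => condErr (η x) (D x)) (g := η)
      fun x hx => if_neg hx, hη _ hA.compl]
    rfl
  rw [← measureReal_def, hsplit, measureReal_union hdisj ((hX hA.compl).inter hT), hon, hoff,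
    integral_add_compl hA (integrable_condErr hηm hηb hD)]

lemma excessRisk_eq_integral_s8 [IsFiniteMeasure μ] (hX : Measurable X)
    (hY : Measurable Y) (hηm : Measurable η) (hηb : ∀ x, η x ∈ Set.Icc (0:ℝ) 1)
    (hη : ∀ A : Set 𝒳, MeasurableSet A →
      ∫ x in A, η x ∂(Measure.map X μ) = (μ (X ⁻¹' A ∩ {ω | Y ω = true})).toReal)
    (hD : Measurable D) :
    (μ {ω | D (X ω) ≠ Y ω}).toReal - (μ {ω | bayesLabel (η (X ω)) ≠ Y ω}).toReal
      = ∫ x, (condErr (η x) (D x) - condErr (η x) (bayesLabel (η x))) ∂μ.map X := by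
  rw [measureReal_ne_eq_integral_condErr hX hY hηm hηb hη hD,
    measureReal_ne_eq_integral_condErr hX hY hηm hηb hη (measurable_bayesLabel hηm),
    integral_sub (integrable_condErr hηm hηb hD)
      (integrable_condErr hηm hηb (measurable_bayesLabel hηm))]

lemma integrable_condErr_sub_bayesLabel {ν : Measure 𝒳} [IsFiniteMeasure ν]
    (hηm : Measurable η) (hηb : ∀ x, η x ∈ Set.Icc (0:ℝ) 1) (hD : Measurable D) :
    Integrable (fun x => condErr (η x) (D x) - condErr (η x) (bayesLabel (η x))) ν :=
  (integrable_condErr hηm hηb hD).sub (integrable_condErr hηm hηb (measurable_bayesLabel hηm))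

end Risk

theorem stmt8_general {Ω 𝒳 : Type*} [MeasurableSpace Ω] [MeasurableSpace 𝒳]
    (μ : Measure Ω) [IsProbabilityMeasure μ]
    (X : Ω → 𝒳) (Y Yt : Ω → Bool)
    (hX : Measurable X) (hY : Measurable Y) (hYt : Measurable Yt)
    (η ηt ρ0 ρ1 : 𝒳 → ℝ)
    (hηm : Measurable η) (hηtm : Measurable ηt)
    (hηb : ∀ x, η x ∈ Set.Icc (0:ℝ) 1)
    (hρ0b : ∀ x, ρ0 x ∈ Set.Icc (0:ℝ) 1) (hρ1b : ∀ x, ρ1 x ∈ Set.Icc (0:ℝ) 1)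
    (hη : ∀ A : Set 𝒳, MeasurableSet A →
      ∫ x in A, η x ∂(Measure.map X μ) = (μ (X ⁻¹' A ∩ {ω | Y ω = true})).toReal)
    (hηt : ∀ A : Set 𝒳, MeasurableSet A →
      ∫ x in A, ηt x ∂(Measure.map X μ) = (μ (X ⁻¹' A ∩ {ω | Yt ω = true})).toReal)
    -- the corrupted regression function identity
    (hform : ∀ x, ηt x = η x * (1 - ρ1 x) + (1 - η x) * ρ0 x)
    (ρs as : ℝ) (hρs : ρs < 1/2) (has : as < 1)
    (hnoise : ∀ᵐ x ∂(Measure.map X μ), η x ≠ 1/2 →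
      ρ0 x + ρ1 x ≤ 2 * ρs ∧
      (ρ1 x - ρ0 x) / ((2 * η x - 1) * (1 - ρ0 x - ρ1 x)) ≤ as)
    (CBayes CtBayes : 𝒳 → Bool)
    (hCBayes : ∀ x, CBayes x = if (1/2 : ℝ) ≤ η x then true else false)
    (hCtBayes : ∀ x, CtBayes x = if (1/2 : ℝ) ≤ ηt x then true else false)
    (C : 𝒳 → Bool) (hC : Measurable C) :
    (μ {ω | C (X ω) ≠ Y ω}).toReal - (μ {ω | CBayes (X ω) ≠ Y ω}).toReal
      ≤ ((μ {ω | C (X ω) ≠ Yt ω}).toReal - (μ {ω | CtBayes (X ω) ≠ Yt ω}).toReal)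
          / ((1 - 2 * ρs) * (1 - as)) := by
  have hκ : 0 < (1 - 2 * ρs) * (1 - as) := mul_pos (by linarith) (by linarith)
  have hηtb : ∀ x, ηt x ∈ Set.Icc (0:ℝ) 1 := fun x => by
    rw [hform x]
    exact convex_Icc (0:ℝ) 1 ⟨by linarith [(hρ1b x).2], by linarith [(hρ1b x).1]⟩ (hρ0b x)
      (hηb x).1 (by linarith [(hηb x).2]) (by ring)
  obtain rfl : CBayes = fun x => bayesLabel (η x) := funext hCBayes
  obtain rfl : CtBayes = fun x => bayesLabel (ηt x) := funext hCtBayes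
  rw [excessRisk_eq_integral_s8 hX hY hηm hηb hη hC,
    excessRisk_eq_integral_s8 hX hYt hηtm hηtb hηt hC, ← integral_div]
  refine integral_mono_ae (integrable_condErr_sub_bayesLabel hηm hηb hC)
    ((integrable_condErr_sub_bayesLabel hηtm hηtb hC).div_const _) ?_
  filter_upwards [hnoise] with x hx
  exact condErr_sub_condErr_bayesLabel_le_div hκ (noise_margin hρs has (hform x) hx) (C x)

/-- If there exist `ρ* < 1/2` and `a* < 1` such that, P_X-a.e. on `{η ≠ 1/2}`,
`ρ₀ + ρ₁ ≤ 2ρ*` and `(ρ₁ − ρ₀)/((2η−1)(1−ρ₀−ρ₁)) ≤ a*`, then for any classifier `C`,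
`R(C) − R(C^Bayes) ≤ (R̃(C) − R̃(C̃^Bayes)) / ((1−2ρ*)(1−a*))`. -/
theorem stmt8 {Ω 𝒳 : Type*} [MeasurableSpace Ω] [MeasurableSpace 𝒳]
    (μ : Measure Ω) [IsProbabilityMeasure μ]
    (X : Ω → 𝒳) (Y Yt : Ω → Bool)
    (hX : Measurable X) (hY : Measurable Y) (hYt : Measurable Yt)
    (η ηt ρ0 ρ1 : 𝒳 → ℝ)
    (hηm : Measurable η) (hηtm : Measurable ηt)
    (hρ0m : Measurable ρ0) (hρ1m : Measurable ρ1)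
    (hηb : ∀ x, η x ∈ Set.Icc (0:ℝ) 1)
    (hρ0b : ∀ x, ρ0 x ∈ Set.Icc (0:ℝ) 1) (hρ1b : ∀ x, ρ1 x ∈ Set.Icc (0:ℝ) 1)
    (hη : ∀ A : Set 𝒳, MeasurableSet A →
      ∫ x in A, η x ∂(Measure.map X μ) = (μ (X ⁻¹' A ∩ {ω | Y ω = true})).toReal)
    (hηt : ∀ A : Set 𝒳, MeasurableSet A →
      ∫ x in A, ηt x ∂(Measure.map X μ) = (μ (X ⁻¹' A ∩ {ω | Yt ω = true})).toReal)
    -- the corrupted regression function identity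
    (hform : ∀ x, ηt x = η x * (1 - ρ1 x) + (1 - η x) * ρ0 x)
    (ρs as : ℝ) (hρs0 : 0 ≤ ρs) (hρs : ρs < 1/2) (has : as < 1)
    (hnoise : ∀ᵐ x ∂(Measure.map X μ), η x ≠ 1/2 →
      ρ0 x + ρ1 x ≤ 2 * ρs ∧
      (ρ1 x - ρ0 x) / ((2 * η x - 1) * (1 - ρ0 x - ρ1 x)) ≤ as)
    (CBayes CtBayes : 𝒳 → Bool)
    (hCBayes : ∀ x, CBayes x = if (1/2 : ℝ) ≤ η x then true else false)
    (hCtBayes : ∀ x, CtBayes x = if (1/2 : ℝ) ≤ ηt x then true else false)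
    (C : 𝒳 → Bool) (hC : Measurable C) :
    (μ {ω | C (X ω) ≠ Y ω}).toReal - (μ {ω | CBayes (X ω) ≠ Y ω}).toReal
      ≤ ((μ {ω | C (X ω) ≠ Yt ω}).toReal - (μ {ω | CtBayes (X ω) ≠ Yt ω}).toReal)
          / ((1 - 2 * ρs) * (1 - as)) :=
  stmt8_general μ X Y Yt hX hY hYt η ηt ρ0 ρ1 hηm hηtm hηb hρ0b hρ1b hη hηt hform ρs as hρs has
    hnoise CBayes CtBayes hCBayes hCtBayes C hC
end

section
/- Under Assumption B1 with g′(1/2) > 2g(1/2), there exists δ₀ > 0 such that for all x with 0 < |η(x) − 1/2| < δ₀, we have |η̃(x) − 1/2| > |η(x) − 1/2|; i.e., label noise strictly amplifies the margin near the decision boundary. -/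
/-! With `t = η x - 1/2`, Assumption B1 turns the noise formula into
`η̃ x - 1/2 = t * marginGain g t`. The gain contains the symmetric difference quotient
`(g (1/2 + t) - g (1/2 - t)) / (2 t) → g'`, so it tends to `1 - 2 g (1/2) + g' > 1` as `t → 0`:
close to the boundary the margin is multiplied by a factor larger than one. -/

open Filter Topology

theorem HasDerivAt.tendsto_symmetric_slope_zero {𝕜 F : Type*} [NontriviallyNormedField 𝕜]
    [NormedAddCommGroup F] [NormedSpace 𝕜 F] [NeZero (2 : 𝕜)] {f : 𝕜 → F} {f' : F} {x : 𝕜}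
    (hf : HasDerivAt f f' x) :
    Tendsto (fun t ↦ (2 * t)⁻¹ • (f (x + t) - f (x - t))) (𝓝[≠] 0) (𝓝 f') := by
  have hneg : Tendsto (fun t : 𝕜 ↦ -t) (𝓝[≠] 0) (𝓝[≠] 0) :=
    tendsto_nhdsWithin_of_tendsto_nhds_of_eventually_within _
      ((continuous_neg.tendsto' 0 0 neg_zero).mono_left nhdsWithin_le_nhds)
      (eventually_nhdsWithin_of_forall fun t ht ↦ neg_ne_zero.mpr ht)
  have hsum := (hf.tendsto_slope_zero.add (hf.tendsto_slope_zero.comp hneg)).const_smul (2⁻¹ : 𝕜)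
  rw [← two_smul 𝕜 f', smul_smul, inv_mul_cancel₀ two_ne_zero, one_smul] at hsum
  refine hsum.congr' (eventually_nhdsWithin_of_forall fun t ht ↦ ?_)
  simp only [Function.comp_apply, inv_neg, neg_smul, ← sub_eq_add_neg, ← smul_sub, mul_inv,
    smul_smul]
  rw [sub_sub_sub_cancel_right]

noncomputable def marginGain (g : ℝ → ℝ) (t : ℝ) : ℝ :=
  1 - g (1/2 + t) - g (1/2 - t) + (g (1/2 + t) - g (1/2 - t)) / (2 * t)

theorem mul_marginGain (g : ℝ → ℝ) {t : ℝ} (ht : t ≠ 0) :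
    t * marginGain g t
      = t * (1 - g (1/2 + t) - g (1/2 - t)) + 1/2 * (g (1/2 + t) - g (1/2 - t)) := by
  unfold marginGain
  field_simp

theorem tendsto_marginGain {g : ℝ → ℝ} {g' : ℝ} (hg : HasDerivAt g g' (1/2)) :
    Tendsto (marginGain g) (𝓝[≠] 0) (𝓝 (1 - 2 * g (1/2) + g')) := by
  have hcont : Tendsto (fun t ↦ g (1/2 + t) + g (1/2 - t)) (𝓝[≠] 0) (𝓝 (2 * g (1/2))) := by
    have hplus : ContinuousAt (fun t ↦ g (1/2 + t)) 0 :=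
      hg.continuousAt.comp_of_eq (by fun_prop) (add_zero _)
    have hminus : ContinuousAt (fun t ↦ g (1/2 - t)) 0 :=
      hg.continuousAt.comp_of_eq (by fun_prop) (sub_zero _)
    simpa [two_mul] using (hplus.tendsto.add hminus.tendsto).mono_left nhdsWithin_le_nhds
  have hsym := hg.tendsto_symmetric_slope_zero
  refine ((hcont.const_sub 1).add hsym).congr fun t ↦ ?_
  simp only [marginGain, smul_eq_mul]
  ring

theorem eventually_one_lt_marginGain {g : ℝ → ℝ} {g' : ℝ} (hg : HasDerivAt g g' (1/2))
    (hg' : 2 * g (1/2) < g') : ∀ᶠ t in 𝓝[≠] 0, 1 < marginGain g t :=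
  (tendsto_marginGain hg).eventually (eventually_gt_nhds (by linarith))

theorem stmt10_general {𝒳 : Type*} (η ηt ρ0 ρ1 : 𝒳 → ℝ)
    (hform : ∀ x, ηt x - 1/2
      = (η x - 1/2) * (1 - ρ0 x - ρ1 x) + (1/2) * (ρ0 x - ρ1 x))
    (δ : ℝ) (hδ : 0 < δ) (g : ℝ → ℝ) (g' : ℝ)
    (hderiv : HasDerivAt g g' (1/2))
    (hB1 : ∀ x, η x ∈ Set.Ioo ((1:ℝ)/2 - δ) (1/2 + δ) →
      ρ0 x = g (η x) ∧ ρ1 x = g (1 - η x))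
    (hg : g' > 2 * g (1/2)) :
    ∃ δ₀ > 0, ∀ x, 0 < |η x - 1/2| → |η x - 1/2| < δ₀ →
      |ηt x - 1/2| > |η x - 1/2| := by
  obtain ⟨ε, hε, hgain⟩ := Metric.eventually_nhds_iff.mp
    (eventually_nhdsWithin_iff.mp (eventually_one_lt_marginGain hderiv hg))
  refine ⟨min ε δ, lt_min hε hδ, fun x hpos hlt ↦ ?_⟩
  have hne : η x - 1/2 ≠ 0 := abs_pos.mp hpos
  have hmem : η x ∈ Set.Ioo ((1:ℝ)/2 - δ) (1/2 + δ) := by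
    have := abs_lt.mp (hlt.trans_le (min_le_right ε δ))
    constructor <;> linarith
  obtain ⟨hρ0, hρ1⟩ := hB1 x hmem
  have hgain_x : 1 < marginGain g (η x - 1/2) :=
    hgain (by simpa using hlt.trans_le (min_le_left ε δ)) hne
  have hrescale : ηt x - 1/2 = (η x - 1/2) * marginGain g (η x - 1/2) := by
    rw [mul_marginGain g hne, add_sub_cancel, show (1:ℝ)/2 - (η x - 1/2) = 1 - η x by ring,
      hform, hρ0, hρ1]
  rw [hrescale, abs_mul, abs_of_pos (one_pos.trans hgain_x)]
  exact lt_mul_of_one_lt_right hpos hgain_x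

/-- Under Assumption B1 with `g′(1/2) > 2g(1/2)`, there exists `δ₀ > 0` such
that for all `x` with `0 < |η(x) − 1/2| < δ₀`, `|η̃(x) − 1/2| > |η(x) − 1/2|`. -/
theorem stmt10 {𝒳 : Type*} (η ηt ρ0 ρ1 : 𝒳 → ℝ)
    (hform : ∀ x, ηt x - 1/2
      = (η x - 1/2) * (1 - ρ0 x - ρ1 x) + (1/2) * (ρ0 x - ρ1 x))
    (δ : ℝ) (hδ : 0 < δ) (g : ℝ → ℝ) (g' : ℝ)
    (hrange : ∀ t ∈ Set.Ioo ((1:ℝ)/2 - δ) (1/2 + δ), g t ∈ Set.Ico (0:ℝ) 1)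
    (hderiv : HasDerivAt g g' (1/2))
    (hB1 : ∀ x, η x ∈ Set.Ioo ((1:ℝ)/2 - δ) (1/2 + δ) →
      ρ0 x = g (η x) ∧ ρ1 x = g (1 - η x))
    (hg : g' > 2 * g (1/2)) :
    ∃ δ₀ > 0, ∀ x, 0 < |η x - 1/2| → |η x - 1/2| < δ₀ →
      |ηt x - 1/2| > |η x - 1/2| :=
  stmt10_general η ηt ρ0 ρ1 hform δ hδ g g' hderiv hB1 hg
end

section
/- If the distribution P satisfies the margin assumption with parameter γ₁ and constant κ₁, and if |2η̃(x)−1| ≥ |2η(x)−1|(1−2ρ*)(1−a*) for P_X-almost all x (with η̃ = 1/2 exactly where η = 1/2), then the corrupted distribution P̃ satisfies the margin assumption with the same parameter γ₁ and constant κ₁/{(1−2ρ*)^{γ₁}(1−a*)^{γ₁}}: that is, P_X({x : 0 < |η̃(x)−1/2| ≤ t}) ≤ κ₁ t^{γ₁}/{(1−2ρ*)(1−a*)}^{γ₁} for all t > 0. -/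
open MeasureTheory

/-- If `P_X` satisfies the margin assumption for `η` with parameter `γ₁` and
constant `κ₁`, and `|2η̃ − 1| ≥ |2η − 1|(1−2ρ*)(1−a*)` P_X-a.e. (with `η̃ = 1/2` exactly where
`η = 1/2`, P_X-a.e.), then the corrupted distribution satisfies the margin assumption with the
same parameter and constant `κ₁/((1−2ρ*)(1−a*))^{γ₁}`. -/
theorem stmt13 {𝒳 : Type*} [MeasurableSpace 𝒳]
    (PX : Measure 𝒳) [IsProbabilityMeasure PX]
    (η ηt : 𝒳 → ℝ) (hηm : Measurable η) (hηtm : Measurable ηt)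
    (γ₁ κ₁ ρs as : ℝ) (hγ₁ : 0 ≤ γ₁) (hκ₁ : 0 < κ₁)
    (hρs0 : 0 ≤ ρs) (hρs : ρs < 1/2) (has : as < 1)
    (hmargin : ∀ t : ℝ, 0 < t →
      (PX {x | 0 < |η x - 1/2| ∧ |η x - 1/2| ≤ t}).toReal ≤ κ₁ * t ^ γ₁)
    (hae : ∀ᵐ x ∂PX, |2 * ηt x - 1| ≥ |2 * η x - 1| * (1 - 2 * ρs) * (1 - as))
    (hS : ∀ᵐ x ∂PX, (ηt x = 1/2 ↔ η x = 1/2)) :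
    ∀ t : ℝ, 0 < t →
      (PX {x | 0 < |ηt x - 1/2| ∧ |ηt x - 1/2| ≤ t}).toReal
        ≤ κ₁ * t ^ γ₁ / ((1 - 2 * ρs) * (1 - as)) ^ γ₁ := by
  intro t ht
  set c : ℝ := (1 - 2 * ρs) * (1 - as) with hc_def
  have hc : 0 < c := by
    apply mul_pos <;> linarith
  have hsub : {x | 0 < |ηt x - 1/2| ∧ |ηt x - 1/2| ≤ t}
      ≤ᵐ[PX] {x | 0 < |η x - 1/2| ∧ |η x - 1/2| ≤ t / c} := by
    filter_upwards [hae, hS] with x h1 h2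
    intro hx
    obtain ⟨hx1, hx2⟩ := hx
    have habs : ∀ y : ℝ, |2 * y - 1| = 2 * |y - 1/2| := by
      intro y
      rw [show (2 : ℝ) * y - 1 = 2 * (y - 1/2) by ring, abs_mul]
      norm_num
    constructor
    · have hne : ηt x ≠ 1/2 := by
        intro h; rw [h] at hx1; simp at hx1
      have : η x ≠ 1/2 := fun h => hne (h2.mpr h)
      exact abs_pos.mpr (sub_ne_zero.mpr this)
    · rw [le_div_iff₀ hc]
      have h3 : 2 * |η x - 1/2| * c ≤ 2 * |ηt x - 1/2| := by
        rw [habs, habs] at h1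
        rw [hc_def]
        nlinarith [h1]
      nlinarith
  have hmono : PX {x | 0 < |ηt x - 1/2| ∧ |ηt x - 1/2| ≤ t}
      ≤ PX {x | 0 < |η x - 1/2| ∧ |η x - 1/2| ≤ t / c} :=
    measure_mono_ae hsub
  have htoReal : (PX {x | 0 < |ηt x - 1/2| ∧ |ηt x - 1/2| ≤ t}).toReal
      ≤ (PX {x | 0 < |η x - 1/2| ∧ |η x - 1/2| ≤ t / c}).toReal :=
    ENNReal.toReal_mono (measure_ne_top _ _) hmono
  have hm := hmargin (t / c) (div_pos ht hc)
  calc (PX {x | 0 < |ηt x - 1/2| ∧ |ηt x - 1/2| ≤ t}).toReal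
      ≤ κ₁ * (t / c) ^ γ₁ := le_trans htoReal hm
    _ = κ₁ * t ^ γ₁ / c ^ γ₁ := by
        rw [Real.div_rpow ht.le hc.le, mul_div_assoc]
end

section
/- Fix ρ ∈ (0,1/2). The function χ(π₁) = log(π₁/(1−π₁)) − [(1−2ρ)²π₁(1−π₁) + ρ(1−ρ)]/[(1−2ρ)π₁(1−π₁)] · log([(1−2ρ)π₁+ρ]/[(1−2ρ)(1−π₁)+ρ]) defined for π₁ ∈ (0,1) satisfies χ(1/2) = 0 and χ′(π₁) = [ρ(1−ρ)(1−2π₁)]/[(1−2ρ)π₁²(1−π₁)²] · log([(1−2ρ)π₁+ρ]/[(1−2ρ)(1−π₁)+ρ]) < 0 for all π₁ ∈ (0,1) with π₁ ≠ 1/2; hence χ(π₁) < 0 for π₁ > 1/2 and χ(π₁) > 0 for π₁ < 1/2. -/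
/-! With `c = 1 - 2ρ`, `a = c p + ρ` and `b = c (1 - p) + ρ` one has `a + b = 1` and
`c² p (1 - p) + ρ (1 - ρ) = a b`. So the coefficient `g` of `L = log (a / b)` in `χ` equals
`a b / (c p (1 - p))`, and `g L' = g c (a + b) / (a b) = 1 / (p (1 - p))` cancels the derivative of
the logit `log (p / (1 - p))`, leaving `χ' = -g' L`. Here `-g'` has the sign of `1 - 2p` and `L`
that of `a - b = c (2p - 1)`, so `χ' < 0` away from `1/2`: `χ` is strictly decreasing on `(0, 1)`
and vanishes at `1/2`. -/

open Real Set Filter Topology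

section Monotonicity

variable {f f' : ℝ → ℝ}

theorem strictAntiOn_of_hasDerivAt_neg {D : Set ℝ} (hD : Convex ℝ D)
    (hf : ∀ x ∈ D, HasDerivAt f (f' x) x) (hf' : ∀ x ∈ interior D, f' x < 0) :
    StrictAntiOn f D :=
  strictAntiOn_of_deriv_neg hD (fun x hx ↦ (hf x hx).continuousAt.continuousWithinAt)
    fun x hx ↦ (hf x (interior_subset hx)).deriv ▸ hf' x hx

theorem strictAntiOn_Ioo_of_hasDerivAt_neg_of_ne {a b c : ℝ} (hc : c ∈ Ioo a b)
    (hf : ∀ x ∈ Ioo a b, HasDerivAt f (f' x) x) (hf' : ∀ x ∈ Ioo a b, x ≠ c → f' x < 0) :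
    StrictAntiOn f (Ioo a b) := by
  rw [← Ioc_union_Ico_eq_Ioo hc.1 hc.2]
  refine StrictAntiOn.union ?_ ?_ (isGreatest_Ioc hc.1) (isLeast_Ico hc.2)
  · refine strictAntiOn_of_hasDerivAt_neg (convex_Ioc a c)
      (fun x hx ↦ hf x ⟨hx.1, hx.2.trans_lt hc.2⟩) fun x hx ↦ ?_
    rw [interior_Ioc] at hx
    exact hf' x ⟨hx.1, hx.2.trans hc.2⟩ hx.2.ne
  · refine strictAntiOn_of_hasDerivAt_neg (convex_Ico c b)
      (fun x hx ↦ hf x ⟨hc.1.trans_le hx.1, hx.2⟩) fun x hx ↦ ?_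
    rw [interior_Ico] at hx
    exact hf' x ⟨hc.1.trans hx.1, hx.2⟩ hx.1.ne'

end Monotonicity

theorem mul_log_div_pos {x y : ℝ} (hx : 0 < x) (hy : 0 < y) (hxy : x ≠ y) :
    0 < (x - y) * log (x / y) := by
  rcases hxy.lt_or_gt with h | h
  · exact mul_pos_of_neg_of_neg (by linarith) (log_neg (by positivity) ((div_lt_one hy).2 h))
  · exact mul_pos (by linarith) (log_pos ((one_lt_div hy).2 h))

theorem hasDerivAt_log_div_one_sub {p : ℝ} (hp : p ∈ Ioo 0 1) :
    HasDerivAt (fun q ↦ log (q / (1 - q))) (1 / (p * (1 - p))) p := by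
  have h1p : 1 - p ≠ 0 := by linarith [hp.2]
  have := ((hasDerivAt_id p).div ((hasDerivAt_id p).const_sub 1) h1p).log
    (div_ne_zero hp.1.ne' h1p)
  refine this.congr_deriv ?_
  simp only [Pi.div_apply, id]
  field_simp
  ring

theorem hasDerivAt_log_div_affine {c d p : ℝ} (ha : c * p + d ≠ 0) (hb : c * (1 - p) + d ≠ 0) :
    HasDerivAt (fun q ↦ log ((c * q + d) / (c * (1 - q) + d)))
      (c / (c * p + d) + c / (c * (1 - p) + d)) p := by
  have hnum : HasDerivAt (fun q ↦ c * q + d) c p := by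
    simpa using ((hasDerivAt_id p).const_mul c).add_const d
  have hden : HasDerivAt (fun q ↦ c * (1 - q) + d) (-c) p := by
    simpa using (((hasDerivAt_id p).const_sub 1).const_mul c).add_const d
  refine ((hnum.div hden hb).log (div_ne_zero ha hb)).congr_deriv ?_
  simp only [Pi.div_apply]
  field_simp
  ring

noncomputable def chi (ρ p : ℝ) : ℝ :=
  log (p / (1 - p))
    - (((1 - 2*ρ)^2 * p * (1 - p) + ρ * (1 - ρ)) / ((1 - 2*ρ) * p * (1 - p)))
      * log (((1 - 2*ρ) * p + ρ) / ((1 - 2*ρ) * (1 - p) + ρ))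

noncomputable def chiDeriv (ρ p : ℝ) : ℝ :=
  (ρ * (1 - ρ) * (1 - 2*p)) / ((1 - 2*ρ) * p^2 * (1 - p)^2)
    * log (((1 - 2*ρ) * p + ρ) / ((1 - 2*ρ) * (1 - p) + ρ))

section Chi

variable {ρ p : ℝ}

theorem chi_half (ρ : ℝ) : chi ρ (1/2) = 0 := by
  norm_num [chi]

theorem hasDerivAt_chi (hρ0 : 0 ≤ ρ) (hρ1 : ρ < 1/2) (hp : p ∈ Ioo 0 1) :
    HasDerivAt (chi ρ) (chiDeriv ρ p) p := by
  obtain ⟨hp0, hp1⟩ := hp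
  have hc : 0 < 1 - 2*ρ := by linarith
  have ha : 0 < (1 - 2*ρ) * p + ρ := by positivity
  have hb : 0 < (1 - 2*ρ) * (1 - p) + ρ := by nlinarith
  have h1p : 0 < 1 - p := by linarith
  have hcoef : HasDerivAt
      (fun q ↦ ((1 - 2*ρ)^2 * q * (1 - q) + ρ * (1 - ρ)) / ((1 - 2*ρ) * q * (1 - q)))
      (-(ρ * (1 - ρ) * (1 - 2*p)) / ((1 - 2*ρ) * p^2 * (1 - p)^2)) p := by
    have hq : HasDerivAt (fun q ↦ q * (1 - q)) (1 - 2*p) p :=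
      ((hasDerivAt_id' p).mul ((hasDerivAt_id' p).const_sub 1)).congr_deriv (by ring)
    have h := ((hq.const_mul ((1 - 2*ρ)^2)).add_const (ρ * (1 - ρ))).div (hq.const_mul (1 - 2*ρ))
      (by positivity)
    refine (h.congr_deriv ?_).congr_of_eventuallyEq (Eventually.of_forall fun q ↦ ?_)
    · field_simp
      ring
    · simp only [Pi.div_apply]
      ring
  have hcancel : ((1 - 2*ρ)^2 * p * (1 - p) + ρ * (1 - ρ)) / ((1 - 2*ρ) * p * (1 - p)) *
      ((1 - 2*ρ) / ((1 - 2*ρ) * p + ρ) + (1 - 2*ρ) / ((1 - 2*ρ) * (1 - p) + ρ))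
        = 1 / (p * (1 - p)) := by
    field_simp
    ring
  refine ((hasDerivAt_log_div_one_sub ⟨hp0, hp1⟩).sub
    (hcoef.mul (hasDerivAt_log_div_affine ha.ne' hb.ne'))).congr_deriv ?_
  rw [hcancel, chiDeriv]
  ring

theorem chiDeriv_neg (hρ : ρ ∈ Ioo 0 (1/2)) (hp : p ∈ Ioo 0 1) (hp2 : p ≠ 1/2) :
    chiDeriv ρ p < 0 := by
  obtain ⟨hρ0, hρ1⟩ := hρ
  obtain ⟨hp0, hp1⟩ := hp
  have hc : 0 < 1 - 2*ρ := by linarith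
  have ha : 0 < (1 - 2*ρ) * p + ρ := by positivity
  have hb : 0 < (1 - 2*ρ) * (1 - p) + ρ := by nlinarith
  have hab : (1 - 2*ρ) * p + ρ ≠ (1 - 2*ρ) * (1 - p) + ρ := fun h ↦ hp2 (by nlinarith)
  have hfactor : chiDeriv ρ p = -(ρ * (1 - ρ) / ((1 - 2*ρ)^2 * p^2 * (1 - p)^2)) *
      ((((1 - 2*ρ) * p + ρ) - ((1 - 2*ρ) * (1 - p) + ρ))
        * log (((1 - 2*ρ) * p + ρ) / ((1 - 2*ρ) * (1 - p) + ρ))) := by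
    have h1p : 1 - p ≠ 0 := by linarith
    unfold chiDeriv
    generalize 1 - 2*ρ = c at hc ⊢
    field_simp
    ring
  have h1ρ : 0 < 1 - ρ := by linarith
  rw [hfactor, neg_mul]
  exact neg_neg_of_pos (mul_pos (by positivity) (mul_log_div_pos ha hb hab))

theorem strictAntiOn_chi (hρ : ρ ∈ Ioo 0 (1/2)) : StrictAntiOn (chi ρ) (Ioo 0 1) :=
  strictAntiOn_Ioo_of_hasDerivAt_neg_of_ne (by norm_num)
    (fun _ hp ↦ hasDerivAt_chi hρ.1.le hρ.2 hp) fun _ hp hp2 ↦ chiDeriv_neg hρ hp hp2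

end Chi

/-- fix `ρ ∈ (0,1/2)` and let
`χ(p) = log(p/(1−p)) − [((1−2ρ)²p(1−p) + ρ(1−ρ))/((1−2ρ)p(1−p))] log(((1−2ρ)p+ρ)/((1−2ρ)(1−p)+ρ))`
on `(0,1)`. Then `χ(1/2) = 0`, and for `p ∈ (0,1)` with `p ≠ 1/2` the derivative equals the
stated expression and is negative; hence `χ(p) < 0` for `p > 1/2` and `χ(p) > 0` for `p < 1/2`. -/
theorem stmt16 (ρ : ℝ) (hρ : ρ ∈ Set.Ioo (0:ℝ) (1/2))
    (χ : ℝ → ℝ)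
    (hχ : ∀ p ∈ Set.Ioo (0:ℝ) 1, χ p =
      Real.log (p / (1 - p))
        - (((1 - 2*ρ)^2 * p * (1 - p) + ρ * (1 - ρ)) / ((1 - 2*ρ) * p * (1 - p)))
            * Real.log (((1 - 2*ρ) * p + ρ) / ((1 - 2*ρ) * (1 - p) + ρ))) :
    χ (1/2) = 0 ∧
    (∀ p ∈ Set.Ioo (0:ℝ) 1, p ≠ 1/2 →
      deriv χ p = (ρ * (1 - ρ) * (1 - 2*p)) / ((1 - 2*ρ) * p^2 * (1 - p)^2)
          * Real.log (((1 - 2*ρ) * p + ρ) / ((1 - 2*ρ) * (1 - p) + ρ)) ∧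
      deriv χ p < 0) ∧
    (∀ p ∈ Set.Ioo (0:ℝ) 1, 1/2 < p → χ p < 0) ∧
    (∀ p ∈ Set.Ioo (0:ℝ) 1, p < 1/2 → 0 < χ p) := by
  have hχ' : EqOn χ (chi ρ) (Ioo 0 1) := fun p hp ↦ hχ p hp
  have hderiv (p : ℝ) (hp : p ∈ Ioo 0 1) : HasDerivAt χ (chiDeriv ρ p) p :=
    (hasDerivAt_chi hρ.1.le hρ.2 hp).congr_of_eventuallyEq
      (hχ'.eventuallyEq_of_mem (Ioo_mem_nhds hp.1 hp.2))
  have hhalf : (1/2 : ℝ) ∈ Ioo 0 1 := by norm_num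
  have hanti := strictAntiOn_chi hρ
  refine ⟨(hχ' hhalf).trans (chi_half ρ), fun p hp hp2 ↦ ?_, fun p hp h ↦ ?_, fun p hp h ↦ ?_⟩
  · rw [(hderiv p hp).deriv]
    exact ⟨rfl, chiDeriv_neg hρ hp hp2⟩
  · rw [hχ' hp, ← chi_half ρ]
    exact hanti hhalf hp h
  · rw [hχ' hp, ← chi_half ρ]
    exact hanti hp hhalf h
end

section
/- For t ∈ (1/2, 1), the function h(t) = log(t/(1−t)) + 1/(2t) − 1/(2(1−t)) is strictly negative. -/
lemma log_lt_half_sub_inv {x : ℝ} (hx : 1 < x) : Real.log x < (x - x⁻¹) / 2 := by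
  have key : StrictMonoOn (fun y : ℝ => (y - y⁻¹) / 2 - Real.log y) (Set.Ici 1) := by
    apply strictMonoOn_of_deriv_pos (convex_Ici 1)
    · apply ContinuousOn.sub
      · exact (continuousOn_id.sub (continuousOn_inv₀.mono (by
          intro y hy
          simp only [Set.mem_Ici] at hy
          simp only [Set.mem_compl_iff, Set.mem_singleton_iff]
          linarith))).div_const 2
      · exact Real.continuousOn_log.mono (by
          intro y hy
          simp only [Set.mem_Ici] at hy
          simp only [Set.mem_compl_iff, Set.mem_singleton_iff]
          linarith)
    · intro y hy
      rw [interior_Ici] at hy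
      have hy1 : 1 < y := hy
      have hy0 : y ≠ 0 := by linarith
      have hd : HasDerivAt (fun y : ℝ => (y - y⁻¹) / 2 - Real.log y)
          ((1 - -(y ^ 2)⁻¹) / 2 - y⁻¹) y := by
        exact (((hasDerivAt_id y).sub (hasDerivAt_inv hy0)).div_const 2).sub
          (Real.hasDerivAt_log hy0)
      rw [hd.deriv]
      have h2 : (1 - -(y ^ 2)⁻¹) / 2 - y⁻¹ = (y - 1) ^ 2 / (2 * y ^ 2) := by
        field_simp
        ring
      rw [h2]
      apply div_pos
      · nlinarith
      · positivity
  have h1 : (fun y : ℝ => (y - y⁻¹) / 2 - Real.log y) 1 <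
      (fun y : ℝ => (y - y⁻¹) / 2 - Real.log y) x :=
    key (by simp) (by simp [le_of_lt hx]) hx
  simp only [inv_one, sub_self, Real.log_one, zero_div] at h1
  linarith [h1]

/-- for `t ∈ (1/2, 1)`, `log(t/(1−t)) + 1/(2t) − 1/(2(1−t)) < 0`. -/
theorem stmt17 :
    ∀ t ∈ Set.Ioo ((1:ℝ)/2) 1,
      Real.log (t / (1 - t)) + 1 / (2 * t) - 1 / (2 * (1 - t)) < 0 := by
  rintro t ⟨ht1, ht2⟩
  have ht0 : (0:ℝ) < t := by linarith
  have h1t : (0:ℝ) < 1 - t := by linarith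
  have hu : 1 < t / (1 - t) := by
    rw [lt_div_iff₀ h1t]; linarith
  have h := log_lt_half_sub_inv hu
  have heq : (t / (1 - t) - (t / (1 - t))⁻¹) / 2 = 1 / (2 * (1 - t)) - 1 / (2 * t) := by
    rw [inv_div]
    field_simp
    ring
  rw [heq] at h
  linarith
end
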